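/- The set {χ^{*λ} : λ a self-conjugate partition of n} forms a basis of the complex vector space of functions χ: S_n → ℂ satisfying χ(τστ^{-1}) = sgn(τ) χ(σ) for all σ, τ ∈ S_n. -/

import Mathlib

open Equiv Finset Matrix
open scoped BigOperators Classical Kronecker

namespace Paper

/-- The `i`-th largest part (0-indexed) of a partition of `n` (0 if `i` exceeds the length). -/
def partAt {n : ℕ} (l : n.Partition) (i : ℕ) : ℕ :=
  ((l.parts.sort (· ≤ ·)).reverse).getD i 0

/-- The `i`-th part (0-indexed) of the conjugate partition: the number of parts `> i`. -/
def conjPartAt {n : ℕ} (l : n.Partition) (i : ℕ) : ℕ :=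
  (l.parts.filter (fun p => i < p)).card

/-- A partition is self-conjugate when it equals its conjugate. -/
def IsSelfConj {n : ℕ} (l : n.Partition) : Prop :=
  ∀ i, partAt l i = conjPartAt l i

/-- The rank of a partition: the length of the main diagonal of its Young diagram. -/
def rank {n : ℕ} (l : n.Partition) : ℕ :=
  ((Finset.range n).filter (fun i => i < partAt l i)).card

/-- `m(λ) = (n - rank λ)/2`. -/
def mval {n : ℕ} (l : n.Partition) : ℕ := (n - rank l) / 2

/-- The list of diagonal hook lengths `2 λ_k - (2k+1)` (0-indexed `k`), in decreasing order. -/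
def hookParts {n : ℕ} (l : n.Partition) : List ℕ :=
  (List.range (rank l)).map (fun k => 2 * partAt l k - (2 * k + 1))

/-- A partition is strict-odd if its parts are distinct and all odd. -/
def IsStrictOdd {n : ℕ} (l : n.Partition) : Prop :=
  l.parts.Nodup ∧ ∀ p ∈ l.parts, Odd p

/-- The full cycle type of a permutation of `Fin n`, including fixed points as parts `1`. -/
def fullCycleType {n : ℕ} (σ : Equiv.Perm (Fin n)) : Multiset ℕ :=
  σ.cycleType + Multiset.replicate (n - σ.cycleType.sum) 1

/-- `σ` has cycle type `l`. -/
def HasType {n : ℕ} (σ : Equiv.Perm (Fin n)) (l : n.Partition) : Prop :=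
  fullCycleType σ = l.parts

/-- Power sum polynomial `p_k` in `n` variables. -/
noncomputable def pSum (n k : ℕ) : MvPolynomial (Fin n) ℂ :=
  ∑ i : Fin n, MvPolynomial.X i ^ k

/-- Vandermonde product `∏_{i<j} (x_i - x_j)`. -/
noncomputable def vdm (n : ℕ) : MvPolynomial (Fin n) ℂ :=
  ∏ i : Fin n, ∏ j ∈ Finset.Ioi i, (MvPolynomial.X i - MvPolynomial.X j)

/-- The irreducible character `χ^λ` of the symmetric group `S_n`, defined via the Frobenius
character formula: `χ^λ(σ)` is the coefficient of `x^{λ+δ}` in `(∏_{i<j}(x_i-x_j)) p_μ(x)`,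
where `μ` is the cycle type of `σ`. -/
noncomputable def frobChar {n : ℕ} (l : n.Partition) (σ : Equiv.Perm (Fin n)) : ℂ :=
  MvPolynomial.coeff
    (Finsupp.equivFunOnFinite.symm (fun j : Fin n => partAt l j + (n - 1 - (j : ℕ))))
    (vdm n * ((fullCycleType σ).map (pSum n)).prod)

/-- Consecutive blocks of given lengths, starting at a given offset. -/
def blocksAux : List ℕ → ℕ → List (List ℕ)
  | [], _ => []
  | (k :: t), o => ((List.range k).map (o + ·)) :: blocksAux t (o + k)

/-- The canonical permutation of `Fin n` with cycle lengths given by the list `L`: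
each cycle is formed by a consecutive block of indices. -/
def permOfList (n : ℕ) (L : List ℕ) : Equiv.Perm (Fin n) :=
  ((blocksAux L 0).map
    (fun b => (b.filterMap (fun m => if h : m < n then some (⟨m, h⟩ : Fin n) else none)).formPerm)).prod

/-- Sort a multiset of naturals into a decreasing list. -/
def sortDesc (s : Multiset ℕ) : List ℕ := (s.sort (· ≤ ·)).reverse

/-- The class `C^+_μ`-style conjugacy class of `σ` under even permutations. -/
def altClass {n : ℕ} (σ : Equiv.Perm (Fin n)) : Set (Equiv.Perm (Fin n)) :=
  {π | ∃ τ : Equiv.Perm (Fin n), Equiv.Perm.sign τ = 1 ∧ π = τ * σ * τ⁻¹}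

/-- The twisted character `χ^{*λ}` attached to a self-conjugate partition `λ`:
it vanishes off the conjugacy class of cycle type `h(λ)`, and on `σ = τ σ_μ τ⁻¹`
(with `σ_μ` the canonical permutation of type `μ = h(λ)`) it takes the value
`sgn(τ) i^{m(λ)} √(μ_1 ⋯ μ_r)`. -/
noncomputable def twChar {n : ℕ} (l : n.Partition) (σ : Equiv.Perm (Fin n)) : ℂ :=
  if h : ∃ τ : Equiv.Perm (Fin n), σ = τ * permOfList n (hookParts l) * τ⁻¹ then
    ((Equiv.Perm.sign h.choose : ℤ) : ℂ) * Complex.I ^ mval l *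
      ((Real.sqrt ((hookParts l).prod) : ℝ) : ℂ)
  else 0

variable {R : Type*} [Ring R] [Algebra ℂ R]

/-- Row immanant `Σ_τ χ(τ) a_{1τ(1)} ⋯ a_{nτ(n)}` (ordered product). -/
noncomputable def rowImm {k : ℕ} (χ : Equiv.Perm (Fin k) → ℂ)
    (A : Matrix (Fin k) (Fin k) R) : R :=
  ∑ τ : Equiv.Perm (Fin k), χ τ • (List.ofFn (fun i => A i (τ i))).prod

/-- Column immanant `Σ_σ χ(σ⁻¹) a_{σ(1)1} ⋯ a_{σ(n)n}` (ordered product). -/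
noncomputable def colImm {k : ℕ} (χ : Equiv.Perm (Fin k) → ℂ)
    (A : Matrix (Fin k) (Fin k) R) : R :=
  ∑ σ : Equiv.Perm (Fin k), χ σ⁻¹ • (List.ofFn (fun i => A (σ i) i)).prod

/-- `imm_k A = (1/k!) Σ_{I} imm A_{II}`. -/
noncomputable def immSum {k : ℕ} {ι : Type*} [Fintype ι] (χ : Equiv.Perm (Fin k) → ℂ)
    (A : Matrix ι ι R) : R :=
  ((Nat.factorial k : ℂ))⁻¹ • ∑ I : Fin k → ι, rowImm χ (A.submatrix I I)

/-- The entries of a matrix pairwise commute. -/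
def PairwiseCommute {ι κ : Type*} (A : Matrix ι κ R) : Prop :=
  ∀ i j k l, Commute (A i j) (A k l)

/-- The entries of a matrix pairwise anticommute. -/
def PairwiseAnticommute {ι κ : Type*} (A : Matrix ι κ R) : Prop :=
  ∀ i j k l, A i j * A k l = - (A k l * A i j)

/-- Complete homogeneous symmetric polynomial `h_k` evaluated at `x : Fin N → ℂ`. -/
noncomputable def hfun (N k : ℕ) (x : Fin N → ℂ) : ℂ :=
  ∑ m : Sym (Fin N) k, ((m : Multiset (Fin N)).map x).prod

/-- The Schur polynomial `s_λ` evaluated at `x`, via the Jacobi–Trudi formula. -/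
noncomputable def schur {n N : ℕ} (l : n.Partition) (x : Fin N → ℂ) : ℂ :=
  Matrix.det (Matrix.of fun i j : Fin n =>
    if (i : ℕ) ≤ partAt l i + (j : ℕ) then hfun N (partAt l i + (j : ℕ) - (i : ℕ)) x else 0)

/-- The self-conjugate hook partition `(k+1, 1^k)` of `2k+1`. -/
def hookPartition (k : ℕ) : Nat.Partition (2 * k + 1) where
  parts := (k + 1) ::ₘ Multiset.replicate k 1
  parts_pos := by
    intro p hp
    rcases Multiset.mem_cons.mp hp with h | h
    · omega
    · have := Multiset.eq_of_mem_replicate h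
      omega
  parts_sum := by
    simp [Multiset.sum_replicate]
    omega

end Paper

namespace Paper

variable {n : ℕ}

lemma descList_pairwise (l : n.Partition) :
    ((l.parts.sort (· ≤ ·)).reverse).Pairwise (fun a b => b ≤ a) := by
  rw [List.pairwise_reverse]
  exact l.parts.pairwise_sort (· ≤ ·)

lemma descList_length (l : n.Partition) :
    ((l.parts.sort (· ≤ ·)).reverse).length = Multiset.card l.parts := by
  rw [List.length_reverse, Multiset.length_sort]

lemma partAt_antitone (l : n.Partition) {i j : ℕ} (h : i ≤ j) : partAt l j ≤ partAt l i := by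
  unfold partAt
  rcases lt_or_ge j ((l.parts.sort (· ≤ ·)).reverse).length with hj | hj
  · rcases eq_or_lt_of_le h with rfl | hij
    · exact le_refl _
    · have hi : i < ((l.parts.sort (· ≤ ·)).reverse).length := lt_trans hij hj
      have := (List.pairwise_iff_getElem.mp (descList_pairwise l)) i j hi hj hij
      rwa [List.getD_eq_getElem _ _ hi, List.getD_eq_getElem _ _ hj]
  · rw [List.getD_eq_default _ _ hj]
    exact Nat.zero_le _

lemma partAt_pos_iff (l : n.Partition) {i : ℕ} :
    0 < partAt l i ↔ i < Multiset.card l.parts := by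
  rw [← descList_length l]
  constructor
  · intro h
    by_contra hc
    push_neg at hc
    rw [partAt, List.getD_eq_default _ _ hc] at h
    exact lt_irrefl 0 h
  · intro h
    rw [partAt, List.getD_eq_getElem _ _ h]
    apply l.parts_pos
    have : ((l.parts.sort (· ≤ ·)).reverse)[i] ∈ (l.parts.sort (· ≤ ·)).reverse :=
      List.getElem_mem _
    rw [List.mem_reverse, Multiset.mem_sort] at this
    exact this

lemma descList_eq_map (l : n.Partition) :
    (l.parts.sort (· ≤ ·)).reverse = (List.range (Multiset.card l.parts)).map (partAt l) := by
  apply List.ext_getElem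
  · simp [descList_length l]
  · intro i h1 h2
    simp only [List.getElem_map, List.getElem_range]
    rw [partAt, List.getD_eq_getElem _ _ h1]

lemma parts_eq_map (l : n.Partition) :
    l.parts = Multiset.map (partAt l) (Finset.range (Multiset.card l.parts)).val := by
  conv_lhs => rw [← Multiset.sort_eq l.parts (· ≤ ·)]
  rw [← Multiset.coe_reverse, descList_eq_map l, Finset.range_val, Multiset.range,
    Multiset.map_coe]

lemma card_parts_le (l : n.Partition) : Multiset.card l.parts ≤ n := by
  have h := l.parts_sum
  have : Multiset.card l.parts • 1 ≤ l.parts.sum :=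
    Multiset.card_nsmul_le_sum (fun x hx => l.parts_pos hx)
  simpa [h] using this

lemma conjPartAt_eq (l : n.Partition) (i : ℕ) :
    conjPartAt l i = ((Finset.range n).filter (fun j => i < partAt l j)).card := by
  have h2 : Multiset.filter (fun p => i < p) l.parts
      = Multiset.map (partAt l)
        (Multiset.filter (fun j => i < partAt l j) (Finset.range (Multiset.card l.parts)).val) := by
    conv_lhs => rw [parts_eq_map l]
    rw [Multiset.filter_map]
    rfl
  have h1 : conjPartAt l i
      = ((Finset.range (Multiset.card l.parts)).filter (fun j => i < partAt l j)).card := by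
    rw [conjPartAt, h2, Multiset.card_map, Finset.card_def, Finset.filter_val]
  rw [h1]
  congr 1
  apply Finset.ext
  intro j
  simp only [Finset.mem_filter, Finset.mem_range]
  constructor
  · intro ⟨hj, hp⟩
    exact ⟨lt_of_lt_of_le hj (card_parts_le l), hp⟩
  · intro ⟨hj, hp⟩
    refine ⟨?_, hp⟩
    rw [← partAt_pos_iff l]
    omega

lemma sum_partAt (l : n.Partition) : ∑ j ∈ Finset.range n, partAt l j = n := by
  have h1 : ∑ j ∈ Finset.range (Multiset.card l.parts), partAt l j = n := by
    have := l.parts_sum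
    rw [parts_eq_map l] at this
    simpa [Finset.sum] using this
  have h2 : ∑ j ∈ Finset.range (Multiset.card l.parts), partAt l j
      = ∑ j ∈ Finset.range n, partAt l j := by
    apply Finset.sum_subset
    · exact Finset.range_subset_range.mpr (card_parts_le l)
    · intro x _ hx
      rw [Finset.mem_range] at hx
      have := partAt_pos_iff l (i := x)
      omega
  rw [← h2, h1]

lemma lt_partAt_iff_lt_rank (l : n.Partition) (i : ℕ) : i < partAt l i ↔ i < rank l := by
  set S := (Finset.range n).filter (fun i => i < partAt l i) with hS
  have down : ∀ j i : ℕ, j ≤ i → i ∈ S → j ∈ S := by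
    intro j i hji hi
    rw [hS, Finset.mem_filter, Finset.mem_range] at *
    refine ⟨by omega, ?_⟩
    calc j ≤ i := hji
    _ < partAt l i := hi.2
    _ ≤ partAt l j := partAt_antitone l hji
  constructor
  · intro h
    have hin : i ∈ S := by
      rw [hS, Finset.mem_filter, Finset.mem_range]
      refine ⟨?_, h⟩
      have h2 := (partAt_pos_iff l (i := i)).mp (by omega)
      have := card_parts_le l
      omega
    have hsub : Finset.range (i+1) ⊆ S := by
      intro j hj
      rw [Finset.mem_range] at hj
      exact down j i (by omega) hin
    have := Finset.card_le_card hsub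
    rw [Finset.card_range] at this
    rw [rank, ← hS]
    omega
  · intro h
    by_contra hc
    push_neg at hc
    have hsub : S ⊆ Finset.range i := by
      intro j hj
      rw [Finset.mem_range]
      by_contra hji
      push_neg at hji
      have := down i j hji hj
      rw [hS, Finset.mem_filter] at this
      omega
    have := Finset.card_le_card hsub
    rw [Finset.card_range] at this
    rw [rank, ← hS] at h
    omega

lemma rank_le (l : n.Partition) : rank l ≤ n := by
  rw [rank]
  exact le_trans (Finset.card_le_card (Finset.filter_subset _ _))
    (le_of_eq (Finset.card_range n))

lemma partAt_rank_le (l : n.Partition) : partAt l (rank l) ≤ rank l := by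
  have := (lt_partAt_iff_lt_rank l (rank l)).not
  omega

lemma partAt_le (l : n.Partition) (j : ℕ) : partAt l j ≤ n := by
  rcases Nat.eq_zero_or_pos (partAt l j) with h | h
  · omega
  · have hj := (partAt_pos_iff l).mp h
    have hmem : partAt l j ∈ l.parts := by
      rw [parts_eq_map l]
      apply Multiset.mem_map_of_mem
      rw [← Finset.mem_def, Finset.mem_range]
      exact hj
    have := Multiset.le_sum_of_mem hmem
    rwa [l.parts_sum] at this

end Paper


namespace Paper

variable {n : ℕ}

lemma list_range_map_sum (m : ℕ) (f : ℕ → ℕ) :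
    ((List.range m).map f).sum = ∑ i ∈ Finset.range m, f i := rfl

lemma hookParts_length (l : n.Partition) : (hookParts l).length = rank l := by
  simp [hookParts]

lemma hookParts_getD (l : n.Partition) {k : ℕ} (hk : k < rank l) :
    (hookParts l).getD k 0 = 2 * partAt l k - (2 * k + 1) := by
  rw [hookParts, List.getD_eq_getElem _ _ (by simpa using hk)]
  simp

section SelfConj

variable {l : n.Partition}

lemma rank_le_diag (hsc : IsSelfConj l) {j : ℕ} (hj : j < rank l) : rank l ≤ partAt l j := by
  rw [hsc j, conjPartAt_eq]
  have hsub : Finset.range (rank l) ⊆ (Finset.range n).filter (fun k => j < partAt l k) := by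
    intro k hk
    rw [Finset.mem_range] at hk
    rw [Finset.mem_filter, Finset.mem_range]
    refine ⟨lt_of_lt_of_le hk (rank_le l), ?_⟩
    rcases le_or_gt k j with h | h
    · have h1 : j < partAt l j := (lt_partAt_iff_lt_rank l j).mpr hj
      have h2 : partAt l j ≤ partAt l k := partAt_antitone l h
      omega
    · have h1 : k < partAt l k := (lt_partAt_iff_lt_rank l k).mpr hk
      omega
  have := Finset.card_le_card hsub
  simpa using this

lemma tail_eq (hsc : IsSelfConj l) {i : ℕ} (hi : rank l ≤ i) :
    partAt l i = ((Finset.range (rank l)).filter (fun j => i < partAt l j)).card := by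
  rw [hsc i, conjPartAt_eq]
  congr 1
  apply Finset.ext
  intro j
  simp only [Finset.mem_filter, Finset.mem_range]
  constructor
  · rintro ⟨hj, hp⟩
    refine ⟨?_, hp⟩
    by_contra hc
    push_neg at hc
    have h1 : partAt l j ≤ partAt l (rank l) := partAt_antitone l hc
    have h2 := partAt_rank_le l
    omega
  · rintro ⟨hj, hp⟩
    exact ⟨lt_of_lt_of_le hj (rank_le l), hp⟩

lemma sum_sq_odd (r : ℕ) : ∑ k ∈ Finset.range r, (2 * k + 1) = r * r := by
  induction r with
  | zero => simp
  | succ m ih => rw [Finset.sum_range_succ, ih]; ring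

lemma hookParts_sum (hsc : IsSelfConj l) : (hookParts l).sum = n := by
  set r := rank l with hr
  set A := ∑ j ∈ Finset.range r, partAt l j with hA
  have htail : ∀ i ∈ Finset.Ico r n, partAt l i
      = ((Finset.range r).filter (fun j => i < partAt l j)).card := by
    intro i hi
    rw [Finset.mem_Ico] at hi
    exact tail_eq hsc hi.1
  have hT : (∑ i ∈ Finset.Ico r n, partAt l i) + r * r = A := by
    rw [Finset.sum_congr rfl htail]
    have h2 : ∑ i ∈ Finset.Ico r n, ((Finset.range r).filter (fun j => i < partAt l j)).card
        = ∑ j ∈ Finset.range r, ((Finset.Ico r n).filter (fun i => i < partAt l j)).card := by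
      simp_rw [Finset.card_filter]
      rw [Finset.sum_comm]
    rw [h2]
    have h3 : ∀ j ∈ Finset.range r,
        ((Finset.Ico r n).filter (fun i => i < partAt l j)).card = partAt l j - r := by
      intro j hj
      rw [Finset.mem_range] at hj
      have hge : r ≤ partAt l j := rank_le_diag hsc hj
      have hle : partAt l j ≤ n := partAt_le l j
      have : (Finset.Ico r n).filter (fun i => i < partAt l j) = Finset.Ico r (partAt l j) := by
        apply Finset.ext
        intro i
        simp only [Finset.mem_filter, Finset.mem_Ico]
        omega
      rw [this, Nat.card_Ico]
    rw [Finset.sum_congr rfl h3, hA]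
    have h4 : ∑ j ∈ Finset.range r, (partAt l j - r + r) = ∑ j ∈ Finset.range r, partAt l j := by
      apply Finset.sum_congr rfl
      intro j hj
      rw [Finset.mem_range] at hj
      have := rank_le_diag hsc hj
      omega
    rw [← h4, Finset.sum_add_distrib, Finset.sum_const, Finset.card_range, smul_eq_mul]
  have hn : A + ∑ i ∈ Finset.Ico r n, partAt l i = n := by
    conv_rhs => rw [← sum_partAt l]
    rw [hA, Finset.range_eq_Ico, Finset.range_eq_Ico]
    exact Finset.sum_Ico_consecutive (partAt l) (Nat.zero_le r) (rank_le l)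
  have hH : (hookParts l).sum + r * r = 2 * A := by
    rw [hookParts, ← hr, list_range_map_sum]
    have h5 : ∑ k ∈ Finset.range r, (2 * partAt l k - (2 * k + 1)) + ∑ k ∈ Finset.range r, (2 * k + 1)
        = ∑ k ∈ Finset.range r, 2 * partAt l k := by
      rw [← Finset.sum_add_distrib]
      apply Finset.sum_congr rfl
      intro k hk
      rw [Finset.mem_range] at hk
      have := (lt_partAt_iff_lt_rank l k).mpr hk
      omega
    rw [sum_sq_odd] at h5
    rw [h5, ← Finset.mul_sum, hA]
  omega

lemma hookParts_odd (hsc : IsSelfConj l) : ∀ h ∈ hookParts l, Odd h := by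
  intro h hh
  rw [hookParts, List.mem_map] at hh
  obtain ⟨k, hk, rfl⟩ := hh
  rw [List.mem_range] at hk
  have := (lt_partAt_iff_lt_rank l k).mpr hk
  rw [Nat.odd_iff]
  omega

lemma hookParts_pairwise (l : n.Partition) : (hookParts l).Pairwise (· > ·) := by
  rw [hookParts]
  apply List.pairwise_iff_getElem.mpr
  intro i j hi hj hij
  simp only [List.length_map, List.length_range] at hi hj
  simp only [List.getElem_map, List.getElem_range]
  have h1 : partAt l j ≤ partAt l i := partAt_antitone l (le_of_lt hij)
  have h2 := (lt_partAt_iff_lt_rank l j).mpr hj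
  omega

lemma hookParts_nodup (l : n.Partition) : (hookParts l).Nodup :=
  (hookParts_pairwise l).imp (fun h => ne_of_gt h)

lemma partAt_inj {l m : n.Partition} (h : ∀ i, partAt l i = partAt m i) : l = m := by
  have hiff : ∀ i, i < Multiset.card l.parts ↔ i < Multiset.card m.parts := by
    intro i
    rw [← partAt_pos_iff, h i, partAt_pos_iff]
  have hc : Multiset.card l.parts = Multiset.card m.parts := by
    have h1 := hiff (Multiset.card l.parts)
    have h2 := hiff (Multiset.card m.parts)
    omega
  apply Nat.Partition.ext
  have h3 : (l.parts.sort (· ≤ ·)).reverse = (m.parts.sort (· ≤ ·)).reverse := by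
    rw [descList_eq_map, descList_eq_map, hc]
    congr 1
    funext i
    exact h i
  have h2 : l.parts.sort (· ≤ ·) = m.parts.sort (· ≤ ·) := List.reverse_injective h3
  calc l.parts = ↑(l.parts.sort (· ≤ ·)) := (Multiset.sort_eq _ _).symm
    _ = ↑(m.parts.sort (· ≤ ·)) := by rw [h2]
    _ = m.parts := Multiset.sort_eq _ _

lemma hookParts_inj {l m : n.Partition} (hl : IsSelfConj l) (hm : IsSelfConj m)
    (h : hookParts l = hookParts m) : l = m := by
  have hr : rank l = rank m := by
    have := congrArg List.length h
    rwa [hookParts_length, hookParts_length] at this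
  have hdiag : ∀ k, k < rank l → partAt l k = partAt m k := by
    intro k hk
    have h1 := congrArg (fun L => L.getD k 0) h
    rw [hookParts_getD l hk, hookParts_getD m (hr ▸ hk)] at h1
    have h2 := (lt_partAt_iff_lt_rank l k).mpr hk
    have h3 := (lt_partAt_iff_lt_rank m k).mpr (hr ▸ hk)
    omega
  apply partAt_inj
  intro i
  rcases lt_or_ge i (rank l) with hi | hi
  · exact hdiag i hi
  · rw [tail_eq hl hi, tail_eq hm (hr ▸ hi), ← hr]
    congr 1
    apply Finset.filter_congr
    intro j hj
    rw [Finset.mem_range] at hj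
    rw [hdiag j hj]

end SelfConj

end Paper


namespace Paper

variable {n : ℕ}

lemma downclosed_char {M : ℕ} {p : ℕ → Prop} [DecidablePred p] (hdown : ∀ j i, j ≤ i → p i → p j)
    (hbound : ∀ i, p i → i < M) (i : ℕ) :
    p i ↔ i < ((Finset.range M).filter p).card := by
  constructor
  · intro h
    have hsub : Finset.range (i+1) ⊆ (Finset.range M).filter p := by
      intro j hj
      rw [Finset.mem_range] at hj
      rw [Finset.mem_filter, Finset.mem_range]
      have := hdown j i (by omega) h
      exact ⟨hbound j this, this⟩
    have := Finset.card_le_card hsub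
    rw [Finset.card_range] at this
    omega
  · intro h
    by_contra hc
    have hsub : (Finset.range M).filter p ⊆ Finset.range i := by
      intro j hj
      rw [Finset.mem_filter] at hj
      rw [Finset.mem_range]
      by_contra hji
      push_neg at hji
      exact hc (hdown i j hji hj.2)
    have := Finset.card_le_card hsub
    rw [Finset.card_range] at this
    omega

lemma exists_partition_of_fun (f : ℕ → ℕ) (M : ℕ)
    (hanti : ∀ i j, i ≤ j → f j ≤ f i)
    (hzero : ∀ i, M ≤ i → f i = 0)
    (hsum : ∑ i ∈ Finset.range M, f i = n) :
    ∃ l : n.Partition, ∀ i, partAt l i = f i := by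
  classical
  set m := ((Finset.range M).filter (fun i => 0 < f i)).card with hm
  have hchar : ∀ i, 0 < f i ↔ i < m := by
    intro i
    rw [hm]
    exact downclosed_char (p := fun i => 0 < f i) (M := M)
      (fun j i hji hi => lt_of_lt_of_le hi (hanti j i hji))
      (fun i hi => by
        by_contra hc; push_neg at hc
        have hi' : 0 < f i := hi
        rw [hzero i hc] at hi'; omega) i
  set L := (List.range m).map f with hL
  have hLlen : L.length = m := by simp [hL]
  have hmsum : (↑L : Multiset ℕ).sum = n := by
    have h1 : (↑L : Multiset ℕ).sum = L.sum := rfl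
    rw [h1, hL, list_range_map_sum]
    rw [← hsum]
    apply Finset.sum_subset
    · intro j hj
      rw [Finset.mem_range] at *
      by_contra hc
      push_neg at hc
      have := hzero j (by omega)
      have := (hchar j).mpr hj
      omega
    · intro x _ hx
      rw [Finset.mem_range] at hx
      have := (hchar x).not
      omega
  refine ⟨⟨(↑L : Multiset ℕ), ?_, hmsum⟩, ?_⟩
  · intro i hi
    rw [Multiset.mem_coe, hL, List.mem_map] at hi
    obtain ⟨j, hj, rfl⟩ := hi
    rw [List.mem_range] at hj
    exact (hchar j).mpr hj
  · intro i
    have hsort : Multiset.sort (↑L : Multiset ℕ) (· ≤ ·) = L.reverse := by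
      apply List.Perm.eq_of_pairwise' (r := (· ≤ ·))
      rotate_right
      · exact ((Multiset.coe_eq_coe).mp (Multiset.sort_eq (↑L : Multiset ℕ) (· ≤ ·))).trans
          (L.reverse_perm).symm
      · exact Multiset.pairwise_sort _ _
      · apply List.pairwise_reverse.mpr
        apply List.pairwise_iff_getElem.mpr
        intro a b ha hb hab
        rw [hLlen] at ha hb
        simp only [hL, List.getElem_map, List.getElem_range]
        exact hanti a b (le_of_lt hab)
    show (((↑L : Multiset ℕ).sort (· ≤ ·)).reverse).getD i 0 = f i
    rw [hsort, List.reverse_reverse]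
    rcases lt_or_ge i m with h | h
    · rw [List.getD_eq_getElem _ _ (by rw [hLlen]; exact h)]
      simp [hL]
    · rw [List.getD_eq_default _ _ (by rw [hLlen]; exact h)]
      have := (hchar i).not
      omega

lemma exists_selfConj (H : List ℕ) (hp : H.Pairwise (· > ·)) (hodd : ∀ h ∈ H, Odd h)
    (hsum : H.sum = n) : ∃ l : n.Partition, IsSelfConj l ∧ hookParts l = H := by
  classical
  set r := H.length with hrdef
  have hmem : ∀ k, k < r → H.getD k 0 ∈ H := by
    intro k hk
    rw [List.getD_eq_getElem _ _ hk]
    exact List.getElem_mem _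
  have hstep : ∀ d k, k + d < r → H.getD (k+d) 0 + 2*d ≤ H.getD k 0 := by
    intro d
    induction d with
    | zero => intro k h; simp
    | succ m ih =>
      intro k h
      have h1 : H.getD (k+m+1) 0 < H.getD (k+m) 0 := by
        have := List.pairwise_iff_getElem.mp hp (k+m) (k+m+1) (by omega) (by omega) (by omega)
        rw [List.getD_eq_getElem _ _ (by omega : k+m < H.length),
          List.getD_eq_getElem _ _ (by omega : k+m+1 < H.length)]
        exact this
      have ho1 := hodd _ (hmem (k+m+1) (by omega))
      have ho2 := hodd _ (hmem (k+m) (by omega))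
      rw [Nat.odd_iff] at ho1 ho2
      have h2 := ih k (by omega)
      have hidx : k + (m+1) = k + m + 1 := by omega
      rw [hidx]
      omega
  set g : ℕ → ℕ := fun k => (H.getD k 0 + 2*k+1)/2 with hgdef
  have h2g : ∀ k, k < r → 2 * g k = H.getD k 0 + 2*k + 1 := by
    intro k hk
    have := hodd _ (hmem k hk)
    rw [Nat.odd_iff] at this
    simp only [hgdef]
    omega
  have hHpos : ∀ k, k < r → 0 < H.getD k 0 := fun k hk => (hodd _ (hmem k hk)).pos
  have hgk : ∀ k, k < r → k < g k := by
    intro k hk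
    have := h2g k hk
    have := hHpos k hk
    omega
  have hganti : ∀ k k', k ≤ k' → k' < r → g k' ≤ g k := by
    intro k k' hkk hk'
    have h1 := hstep (k' - k) k (by omega)
    have h2 := h2g k (by omega)
    have h3 := h2g k' hk'
    have hidx : k + (k' - k) = k' := by omega
    rw [hidx] at h1
    omega
  have hgr : ∀ k, k < r → r ≤ g k := by
    intro k hk
    have h1 := hgk (r-1) (by omega)
    have h2 := hganti k (r-1) (by omega) (by omega)
    omega
  set cnt : ℕ → ℕ := fun i => ((Finset.range r).filter (fun j => i < g j)).card with hcntdef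
  have hK : ∀ i j, (j < r ∧ i < g j) ↔ j < cnt i := by
    intro i j
    have hchar := downclosed_char (M := r) (p := fun j => j < r ∧ i < g j)
      (fun j' j hj' hj => ⟨by omega, lt_of_lt_of_le hj.2 (hganti j' j hj' hj.1)⟩)
      (fun j hj => hj.1) j
    rw [hchar, hcntdef]
    constructor
    · intro h
      refine lt_of_lt_of_le h (Finset.card_le_card ?_)
      intro x hx
      simp only [Finset.mem_filter, Finset.mem_range] at hx ⊢
      exact ⟨hx.1, hx.2.2⟩
    · intro h
      refine lt_of_lt_of_le h (Finset.card_le_card ?_)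
      intro x hx
      simp only [Finset.mem_filter, Finset.mem_range] at hx ⊢
      exact ⟨hx.1, hx⟩
  have hcnt_le : ∀ i, cnt i ≤ r := by
    intro i
    simp only [hcntdef]
    exact le_trans (Finset.card_le_card (Finset.filter_subset _ _))
      (le_of_eq (Finset.card_range r))
  have hcnt_anti : ∀ i j, i ≤ j → cnt j ≤ cnt i := by
    intro i j hij
    simp only [hcntdef]
    apply Finset.card_le_card
    intro x hx
    simp only [Finset.mem_filter, Finset.mem_range] at hx ⊢
    have := hx.2
    exact ⟨hx.1, by omega⟩
  set f : ℕ → ℕ := fun k => if k < r then g k else cnt k with hfdef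
  have hfanti : ∀ i j, i ≤ j → f j ≤ f i := by
    intro i j hij
    simp only [hfdef]
    by_cases hi : i < r
    · by_cases hj : j < r
      · rw [if_pos hi, if_pos hj]
        exact hganti i j hij hj
      · rw [if_pos hi, if_neg hj]
        exact le_trans (hcnt_le j) (hgr i hi)
    · have hj : ¬ j < r := by omega
      rw [if_neg hi, if_neg hj]
      exact hcnt_anti i j hij
  have hg0 : ∀ j, j < r → g j ≤ g 0 := fun j hj => hganti 0 j (by omega) hj
  have hfzero : ∀ i, r + g 0 ≤ i → f i = 0 := by
    intro i hi
    simp only [hfdef]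
    rw [if_neg (by omega)]
    simp only [hcntdef]
    rw [Finset.card_eq_zero, Finset.filter_eq_empty_iff]
    intro j hj
    rw [Finset.mem_range] at hj
    have := hg0 j hj
    omega
  have hHsum : ∑ k ∈ Finset.range r, H.getD k 0 = n := by
    have hHeq : H = (List.range r).map (fun k => H.getD k 0) := by
      apply List.ext_getElem
      · simp [hrdef]
      · intro i h1 h2
        simp only [List.getElem_map, List.getElem_range]
        rw [List.getD_eq_getElem _ _ h1]
    conv_lhs => rw [← list_range_map_sum]
    rw [← hHeq, hsum]
  have h2sumg : 2 * (∑ k ∈ Finset.range r, g k) = n + r * r := by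
    rw [Finset.mul_sum]
    have : ∀ k ∈ Finset.range r, 2 * g k = H.getD k 0 + (2*k+1) := by
      intro k hk
      rw [Finset.mem_range] at hk
      have := h2g k hk
      omega
    rw [Finset.sum_congr rfl this, Finset.sum_add_distrib, hHsum, sum_sq_odd]
  have hsumf : ∑ i ∈ Finset.range (r + g 0), f i = n := by
    rw [Finset.range_eq_Ico, ← Finset.sum_Ico_consecutive _ (Nat.zero_le r) (by omega : r ≤ r + g 0)]
    have hp1 : ∑ i ∈ Finset.Ico 0 r, f i = ∑ i ∈ Finset.range r, g i := by
      rw [← Finset.range_eq_Ico]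
      apply Finset.sum_congr rfl
      intro i hi
      rw [Finset.mem_range] at hi
      simp only [hfdef]
      rw [if_pos hi]
    have hp2 : ∑ i ∈ Finset.Ico r (r + g 0), f i
        = ∑ j ∈ Finset.range r, (g j - r) := by
      have he : ∀ i ∈ Finset.Ico r (r + g 0), f i
          = ((Finset.range r).filter (fun j => i < g j)).card := by
        intro i hi
        rw [Finset.mem_Ico] at hi
        simp only [hfdef, hcntdef]
        rw [if_neg (by omega)]
      rw [Finset.sum_congr rfl he]
      simp_rw [Finset.card_filter]
      rw [Finset.sum_comm]
      apply Finset.sum_congr rfl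
      intro j hj
      rw [Finset.mem_range] at hj
      have h1 : r ≤ g j := hgr j hj
      have h2 : g j ≤ r + g 0 := by have := hg0 j hj; omega
      rw [← Finset.card_filter]
      have hfe : (Finset.Ico r (r + g 0)).filter (fun i => i < g j) = Finset.Ico r (g j) := by
        apply Finset.ext
        intro i
        simp only [Finset.mem_filter, Finset.mem_Ico]
        omega
      rw [hfe, Nat.card_Ico]
    rw [hp1, hp2]
    have hper : ∀ j ∈ Finset.range r, (g j - r) + r = g j := by
      intro j hj
      rw [Finset.mem_range] at hj
      have := hgr j hj
      omega
    have h3 := Finset.sum_congr rfl hper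
    rw [Finset.sum_add_distrib, Finset.sum_const, Finset.card_range, smul_eq_mul] at h3
    have h3' : (∑ x ∈ Finset.range r, (g x - r)) + r * r = ∑ k ∈ Finset.range r, g k := h3
    omega
  obtain ⟨l, hl⟩ := exists_partition_of_fun f (r + g 0) hfanti hfzero hsumf
  have hrank : rank l = r := by
    have hiff : ∀ i, i < rank l ↔ i < r := by
      intro i
      rw [← lt_partAt_iff_lt_rank, hl i]
      simp only [hfdef]
      constructor
      · intro h
        by_contra hc
        push_neg at hc
        rw [if_neg (by omega)] at h
        have := hcnt_le i
        omega
      · intro h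
        rw [if_pos h]
        exact hgk i h
    have h1 := hiff (rank l)
    have h2 := hiff r
    omega
  have hpa : ∀ i, i < r → partAt l i = g i := by
    intro i hi
    rw [hl i]
    simp only [hfdef]
    rw [if_pos hi]
  have hrn : r ≤ n := by
    rw [← hrank]
    exact rank_le l
  have hselfconj : IsSelfConj l := by
    intro i
    rw [conjPartAt_eq]
    rcases lt_or_ge i r with hi | hi
    · have hgle : g i ≤ n := by
        have := partAt_le l i
        rwa [hpa i hi] at this
      have hset : (Finset.range n).filter (fun j => i < partAt l j) = Finset.range (g i) := by
        apply Finset.ext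
        intro j
        simp only [Finset.mem_filter, Finset.mem_range]
        rw [hl j]
        simp only [hfdef]
        constructor
        · rintro ⟨hjn, hj⟩
          by_cases hjr : j < r
          · exact lt_of_lt_of_le hjr (hgr i hi)
          · rw [if_neg hjr] at hj
            exact ((hK j i).mpr hj).2
        · intro hj
          refine ⟨lt_of_lt_of_le hj hgle, ?_⟩
          by_cases hjr : j < r
          · rw [if_pos hjr]
            rcases le_or_gt j i with h | h
            · exact lt_of_lt_of_le (hgk i hi) (hganti j i h hi)
            · exact lt_trans h (hgk j hjr)
          · rw [if_neg hjr]
            exact (hK j i).mp ⟨hi, hj⟩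
      rw [hset, Finset.card_range, hpa i hi]
    · have hset : (Finset.range n).filter (fun j => i < partAt l j)
          = (Finset.range r).filter (fun j => i < g j) := by
        apply Finset.ext
        intro j
        simp only [Finset.mem_filter, Finset.mem_range]
        rw [hl j]
        simp only [hfdef]
        constructor
        · rintro ⟨hjn, hj⟩
          by_cases hjr : j < r
          · rw [if_pos hjr] at hj
            exact ⟨hjr, hj⟩
          · rw [if_neg hjr] at hj
            have := hcnt_le j
            omega
        · rintro ⟨hjr, hj⟩
          rw [if_pos hjr]
          exact ⟨lt_of_lt_of_le hjr hrn, hj⟩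
      rw [hset, hl i]
      simp only [hfdef, hcntdef]
      rw [if_neg (by omega)]
  have hhook : hookParts l = H := by
    apply List.ext_getElem
    · rw [hookParts_length, hrank, hrdef]
    · intro k h1 h2
      rw [hookParts_length, hrank] at h1
      have h3 := h2g k h1
      have e1 : (hookParts l)[k] = 2 * partAt l k - (2*k+1) := by
        simp [hookParts]
      rw [e1, hpa k h1, ← List.getD_eq_getElem H 0 h2]
      omega
  exact ⟨l, hselfconj, hhook⟩

end Paper


namespace Paper

variable {n : ℕ}

lemma eq_of_coe_eq_of_pairwise_gt {L1 L2 : List ℕ} (h : (↑L1 : Multiset ℕ) = ↑L2)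
    (h1 : L1.Pairwise (· > ·)) (h2 : L2.Pairwise (· > ·)) : L1 = L2 :=
  List.Perm.eq_of_pairwise' (r := (· ≥ ·))
    (h1.imp le_of_lt) (h2.imp le_of_lt) (Multiset.coe_eq_coe.mp h)

lemma exists_selfConj_of_multiset (μ : Multiset ℕ) (hnd : μ.Nodup) (hodd : ∀ h ∈ μ, Odd h)
    (hsum : μ.sum = n) :
    ∃ l : n.Partition, IsSelfConj l ∧ (↑(hookParts l) : Multiset ℕ) = μ := by
  set H := (μ.sort (· ≤ ·)).reverse with hH
  have hcoe : (↑H : Multiset ℕ) = μ := by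
    rw [hH, Multiset.coe_reverse, Multiset.sort_eq]
  have hpw : H.Pairwise (· > ·) := by
    rw [hH]
    apply List.pairwise_reverse.mpr
    have h1 : (μ.sort (· ≤ ·)).Pairwise (· < ·) := by
      refine ((Multiset.pairwise_sort _ _).and ?_).imp (fun h => lt_of_le_of_ne h.1 h.2)
      show (μ.sort (· ≤ ·)).Nodup
      rw [← Multiset.coe_nodup, Multiset.sort_eq]
      exact hnd
    exact h1
  have hodd' : ∀ h ∈ H, Odd h := by
    intro h hh
    apply hodd
    rw [← hcoe]
    exact hh
  have hsum' : H.sum = n := by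
    have : (↑H : Multiset ℕ).sum = μ.sum := by rw [hcoe]
    rwa [Multiset.sum_coe, hsum] at this
  obtain ⟨l, h1, h2⟩ := exists_selfConj H hpw hodd' hsum'
  exact ⟨l, h1, by rw [h2, hcoe]⟩

end Paper


namespace Paper

variable {N : ℕ}

open Equiv.Perm in
lemma fullCycleType_conj {σ τ : Equiv.Perm (Fin N)} :
    fullCycleType (τ * σ * τ⁻¹) = fullCycleType σ := by
  rw [fullCycleType, fullCycleType, Equiv.Perm.cycleType_conj]

lemma cycleType_eq_filter (σ : Equiv.Perm (Fin N)) :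
    σ.cycleType = (fullCycleType σ).filter (fun p => 2 ≤ p) := by
  rw [fullCycleType, Multiset.filter_add]
  have h1 : σ.cycleType.filter (fun p => 2 ≤ p) = σ.cycleType :=
    Multiset.filter_eq_self.mpr (fun p hp => Equiv.Perm.two_le_of_mem_cycleType hp)
  have h2 : (Multiset.replicate (N - σ.cycleType.sum) 1).filter (fun p => 2 ≤ p) = 0 := by
    rw [Multiset.filter_eq_nil]
    intro a ha
    have := Multiset.eq_of_mem_replicate ha
    omega
  rw [h1, h2, add_zero]

lemma exists_conj_of_fullCycleType_eq {σ σ' : Equiv.Perm (Fin N)}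
    (h : fullCycleType σ = fullCycleType σ') : ∃ τ, σ' = τ * σ * τ⁻¹ := by
  have hct : σ.cycleType = σ'.cycleType := by
    rw [cycleType_eq_filter, cycleType_eq_filter, h]
  obtain ⟨τ, hτ⟩ := isConj_iff.mp ((Equiv.Perm.isConj_iff_cycleType_eq).mpr hct)
  exact ⟨τ, hτ.symm⟩

lemma perm_apply_inv_self {α : Type*} (f : Equiv.Perm α) (x : α) : f (f⁻¹ x) = x :=
  f.apply_symm_apply x

lemma perm_inv_apply_self {α : Type*} (f : Equiv.Perm α) (x : α) : f⁻¹ (f x) = x :=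
  f.symm_apply_apply x

lemma prod_apply_fix {α : Type*} (L : List (Equiv.Perm α)) (z : α)
    (h : ∀ g ∈ L, g z = z) : L.prod z = z := by
  induction L with
  | nil => rfl
  | cons a t ih =>
    rw [List.prod_cons, Equiv.Perm.mul_apply, ih (fun g hg => h g (List.mem_cons_of_mem _ hg)),
      h a (List.mem_cons_self)]

lemma prod_apply_unique {α : Type*} (F : List (Equiv.Perm α)) (h : Equiv.Perm α → Equiv.Perm α)
    (z : α) (c₀ : Equiv.Perm α) (hnd : F.Nodup) (hc0 : c₀ ∈ F)
    (hfix : ∀ c ∈ F, c ≠ c₀ → (h c) z = z ∧ (h c) ((h c₀) z) = (h c₀) z) :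
    (F.map h).prod z = (h c₀) z := by
  induction F with
  | nil => simp at hc0
  | cons a t ih =>
    rw [List.map_cons, List.prod_cons, Equiv.Perm.mul_apply]
    rcases List.mem_cons.mp hc0 with rfl | hmem
    · have hz : (t.map h).prod z = z := by
        apply prod_apply_fix
        intro g hg
        rw [List.mem_map] at hg
        obtain ⟨c, hc, rfl⟩ := hg
        have hne : c ≠ c₀ := by
          rintro rfl
          exact (List.nodup_cons.mp hnd).1 hc
        exact (hfix c (List.mem_cons_of_mem _ hc) hne).1
      rw [hz]
    · have ha : a ≠ c₀ := by
        rintro rfl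
        exact (List.nodup_cons.mp hnd).1 hmem
      rw [ih (List.nodup_cons.mp hnd).2 hmem
        (fun c hc hne => hfix c (List.mem_cons_of_mem _ hc) hne)]
      exact (hfix a (List.mem_cons_self) ha).2

lemma mem_factors_conj {σ τ c : Equiv.Perm (Fin N)} (hcomm : τ * σ * τ⁻¹ = σ)
    (hc : c ∈ σ.cycleFactorsFinset) : τ * c * τ⁻¹ ∈ σ.cycleFactorsFinset := by
  rw [Equiv.Perm.mem_cycleFactorsFinset_iff] at hc ⊢
  obtain ⟨hcyc, happ⟩ := hc
  refine ⟨hcyc.conj, ?_⟩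
  intro a ha
  rw [Equiv.Perm.support_conj] at ha
  simp only [Finset.mem_map, Equiv.coe_toEmbedding] at ha
  obtain ⟨b, hb, rfl⟩ := ha
  have h1 : (τ * c * τ⁻¹) (τ b) = τ (c b) := by
    simp [Equiv.Perm.mul_apply]
  rw [h1, happ b hb]
  have := congrArg (fun ρ : Equiv.Perm (Fin N) => ρ (τ b)) hcomm
  simpa [Equiv.Perm.mul_apply] using this

lemma sign_eq_one_of_commute {σ : Equiv.Perm (Fin N)}
    (hnd : (fullCycleType σ).Nodup) (hodd : ∀ p ∈ fullCycleType σ, Odd p)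
    {τ : Equiv.Perm (Fin N)} (hcomm : τ * σ * τ⁻¹ = σ) : Equiv.Perm.sign τ = 1 := by
  classical
  have hctnd : σ.cycleType.Nodup :=
    Multiset.nodup_of_le (by rw [fullCycleType]; exact Multiset.le_add_right _ _) hnd
  have hfactor_eq : ∀ c ∈ σ.cycleFactorsFinset, τ * c * τ⁻¹ = c := by
    intro c hc
    have h1 := mem_factors_conj hcomm hc
    have hcard : (τ * c * τ⁻¹).support.card = c.support.card := by
      rw [Equiv.Perm.support_conj, Finset.card_map]
    have hnd2 : (σ.cycleFactorsFinset.val.map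
        (Finset.card ∘ Equiv.Perm.support)).Nodup := by
      rw [← Equiv.Perm.cycleType_def]
      exact hctnd
    exact Multiset.inj_on_of_nodup_map hnd2 _ h1 _ hc hcard
  have hτsupp : ∀ c ∈ σ.cycleFactorsFinset, ∀ z ∈ c.support, τ z ∈ c.support := by
    intro c hc z hz
    have h2 : (τ * c * τ⁻¹).support = c.support := by rw [hfactor_eq c hc]
    rw [Equiv.Perm.support_conj] at h2
    rw [← h2]
    simp only [Finset.mem_map, Equiv.coe_toEmbedding]
    exact ⟨z, hz, rfl⟩
  have hexp : ∀ c ∈ σ.cycleFactorsFinset, ∃ k : ℤ, ∀ z ∈ c.support, τ z = (c ^ k) z := by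
    intro c hc
    have hcyc := (Equiv.Perm.mem_cycleFactorsFinset_iff.mp hc).1
    obtain ⟨x, hx1, -⟩ := id hcyc
    have hxs : x ∈ c.support := Equiv.Perm.mem_support.mpr hx1
    have hcommc : Commute τ c := by
      have := hfactor_eq c hc
      rw [mul_assoc] at this
      rw [Commute, SemiconjBy]
      calc τ * c = (τ * (c * τ⁻¹)) * τ := by group
      _ = c * τ := by rw [this]
    obtain ⟨k, hk⟩ := hcyc.sameCycle hx1
      (Equiv.Perm.mem_support.mp (hτsupp c hc x hxs))
    refine ⟨k, ?_⟩
    intro z hz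
    obtain ⟨j, hj⟩ := hcyc.sameCycle hx1 (Equiv.Perm.mem_support.mp hz)
    have hcj : Commute τ (c ^ j) := hcommc.zpow_right j
    calc τ z = τ ((c ^ j) x) := by rw [hj]
    _ = (τ * c ^ j) x := rfl
    _ = (c ^ j * τ) x := by rw [hcj.eq]
    _ = (c ^ j) (τ x) := rfl
    _ = (c ^ j) ((c ^ k) x) := by rw [hk]
    _ = (c ^ (j + k)) x := by rw [← Equiv.Perm.mul_apply, ← _root_.zpow_add]
    _ = (c ^ (k + j)) x := by rw [add_comm]
    _ = (c ^ k) ((c ^ j) x) := by rw [_root_.zpow_add]; rfl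
    _ = (c ^ k) z := by rw [hj]
  have hfix : ∀ z, σ z = z → τ z = z := by
    intro z hz
    have hrep : N - σ.cycleType.sum ≤ 1 := by
      have h0 := Multiset.nodup_iff_count_le_one.mp hnd 1
      rw [fullCycleType, Multiset.count_add, Multiset.count_replicate_self] at h0
      omega
    have hcompl : ((σ.support)ᶜ : Finset (Fin N)).card ≤ 1 := by
      rw [Finset.card_compl, ← Equiv.Perm.sum_cycleType]
      simpa [Fintype.card_fin] using hrep
    have hz1 : z ∈ (σ.support)ᶜ := by
      rw [Finset.mem_compl, Equiv.Perm.notMem_support]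
      exact hz
    have hz2 : τ z ∈ (σ.support)ᶜ := by
      rw [Finset.mem_compl, Equiv.Perm.notMem_support]
      have := congrArg (fun ρ : Equiv.Perm (Fin N) => ρ (τ z)) hcomm
      simp only [Equiv.Perm.mul_apply] at this
      rw [Paper.perm_inv_apply_self] at this
      rw [← this, hz]
    by_contra hne
    have hsub : ({z, τ z} : Finset (Fin N)) ⊆ (σ.support)ᶜ := by
      intro w hw
      rcases Finset.mem_insert.mp hw with rfl | hw
      · exact hz1
      · rw [Finset.mem_singleton.mp hw]
        exact hz2
    have hcard2 : ({z, τ z} : Finset (Fin N)).card = 2 := by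
      rw [Finset.card_insert_of_notMem (by simpa using fun h => hne h.symm),
        Finset.card_singleton]
    have := Finset.card_le_card hsub
    omega
  choose kk hkk using hexp
  set F := σ.cycleFactorsFinset.toList with hFdef
  have hFnd : F.Nodup := Finset.nodup_toList _
  have hmemF : ∀ c : Equiv.Perm (Fin N), c ∈ F ↔ c ∈ σ.cycleFactorsFinset :=
    fun c => Finset.mem_toList
  set hfun : Equiv.Perm (Fin N) → Equiv.Perm (Fin N) :=
    fun c => if hc : c ∈ σ.cycleFactorsFinset then c ^ (kk c hc) else 1 with hhdef
  have hτ : τ = (F.map hfun).prod := by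
    apply Equiv.ext
    intro z
    by_cases hz : z ∈ σ.support
    · set c₀ := σ.cycleOf z with hc₀
      have hc₀mem : c₀ ∈ σ.cycleFactorsFinset :=
        Equiv.Perm.cycleOf_mem_cycleFactorsFinset_iff.mpr hz
      have hzc₀ : z ∈ c₀.support := by
        rw [hc₀, Equiv.Perm.mem_support_cycleOf_iff]
        exact ⟨Equiv.Perm.SameCycle.refl _ _, hz⟩
      have hfc₀ : hfun c₀ = c₀ ^ (kk c₀ hc₀mem) := by
        rw [hhdef]
        exact dif_pos hc₀mem
      have happly : (F.map hfun).prod z = (hfun c₀) z := by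
        apply prod_apply_unique F hfun z c₀ hFnd ((hmemF c₀).mpr hc₀mem)
        intro c hcF hne
        have hcmem := (hmemF c).mp hcF
        have hdisj : Equiv.Perm.Disjoint c c₀ :=
          (Equiv.Perm.cycleFactorsFinset_pairwise_disjoint σ)
            (Finset.mem_coe.mpr hcmem) (Finset.mem_coe.mpr hc₀mem) hne
        have hzs : z ∉ c.support :=
          Finset.disjoint_right.mp hdisj.disjoint_support hzc₀
        have hfc : hfun c = c ^ (kk c hcmem) := by
          rw [hhdef]
          exact dif_pos hcmem
        constructor
        · rw [hfc]
          exact Equiv.Perm.zpow_apply_eq_self_of_apply_eq_self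
            (Equiv.Perm.notMem_support.mp hzs) _
        · have h2 : (hfun c₀) z ∈ c₀.support := by
            rw [hfc₀]
            exact Equiv.Perm.zpow_apply_mem_support.mpr hzc₀
          have h3 : (hfun c₀) z ∉ c.support :=
            Finset.disjoint_right.mp hdisj.disjoint_support h2
          rw [hfc]
          exact Equiv.Perm.zpow_apply_eq_self_of_apply_eq_self
            (Equiv.Perm.notMem_support.mp h3) _
      rw [happly, hfc₀]
      exact hkk c₀ hc₀mem z hzc₀
    · have hσz : σ z = z := Equiv.Perm.notMem_support.mp hz
      rw [hfix z hσz]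
      symm
      apply prod_apply_fix
      intro g hg
      rw [List.mem_map] at hg
      obtain ⟨c, hcF, rfl⟩ := hg
      have hcmem := (hmemF c).mp hcF
      have hzc : z ∉ c.support := by
        intro hmem
        exact hz (Equiv.Perm.mem_cycleFactorsFinset_support_le hcmem hmem)
      rw [hhdef]
      simp only [dif_pos hcmem]
      exact Equiv.Perm.zpow_apply_eq_self_of_apply_eq_self
        (Equiv.Perm.notMem_support.mp hzc) _
  rw [hτ, MonoidHom.map_list_prod]
  apply List.prod_eq_one
  intro u hu
  rw [List.map_map, List.mem_map] at hu
  obtain ⟨c, hcF, rfl⟩ := hu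
  have hcmem := (hmemF c).mp hcF
  simp only [Function.comp_apply, hhdef, dif_pos hcmem]
  have hcyc := (Equiv.Perm.mem_cycleFactorsFinset_iff.mp hcmem).1
  have hoddc : Odd c.support.card := by
    apply hodd
    rw [fullCycleType]
    apply Multiset.mem_add.mpr
    left
    rw [Equiv.Perm.cycleType_def]
    exact Multiset.mem_map_of_mem _ hcmem
  have hsign : Equiv.Perm.sign c = 1 := by
    rw [hcyc.sign, hoddc.neg_one_pow, neg_neg]
  rw [map_zpow, hsign, _root_.one_zpow]

end Paper


namespace Paper

variable {N : ℕ}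

lemma factor_commute {σ c : Equiv.Perm (Fin N)} (hc : c ∈ σ.cycleFactorsFinset) :
    Commute c σ := by
  conv_rhs => rw [← Equiv.Perm.cycleFactorsFinset_noncommProd σ]
  apply Finset.noncommProd_commute
  intro c' hc'
  by_cases h : c' = c
  · subst h
    exact Commute.refl _
  · exact (Equiv.Perm.cycleFactorsFinset_mem_commute σ)
      (Finset.mem_coe.mpr hc) (Finset.mem_coe.mpr hc') (fun he => h he.symm)

lemma conj_eq_self_of_commute {σ τ : Equiv.Perm (Fin N)} (h : Commute τ σ) :
    τ * σ * τ⁻¹ = σ := by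
  rw [h.eq, mul_assoc, mul_inv_cancel, mul_one]

lemma exists_swap_conj {σ c₁ c₂ : Equiv.Perm (Fin N)}
    (h1 : c₁ ∈ σ.cycleFactorsFinset) (h2 : c₂ ∈ σ.cycleFactorsFinset) (hne : c₁ ≠ c₂)
    (hcard : c₁.support.card = c₂.support.card) :
    ∃ τ : Equiv.Perm (Fin N), τ * σ * τ⁻¹ = σ ∧
      τ.support = c₁.support ∪ c₂.support ∧ τ * τ = 1 := by
  classical
  have hcyc1 := (Equiv.Perm.mem_cycleFactorsFinset_iff.mp h1).1
  have hcyc2 := (Equiv.Perm.mem_cycleFactorsFinset_iff.mp h2).1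
  obtain ⟨π, hπ⟩ := isConj_iff.mp (hcyc1.isConj hcyc2 hcard)
  set s₁ := c₁.support with hs₁
  set s₂ := c₂.support with hs₂
  have hdisj : Disjoint s₁ s₂ :=
    ((Equiv.Perm.cycleFactorsFinset_pairwise_disjoint σ) (Finset.mem_coe.mpr h1)
      (Finset.mem_coe.mpr h2) hne).disjoint_support
  have hπs : ∀ x, x ∈ s₁ ↔ π x ∈ s₂ := by
    intro x
    have he : s₂ = s₁.map π.toEmbedding := by
      rw [hs₂, ← hπ, Equiv.Perm.support_conj]
    rw [he]
    exact (Finset.mem_map' _).symm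
  have hπ's : ∀ x, x ∈ s₂ ↔ π⁻¹ x ∈ s₁ := by
    intro x
    rw [hπs (π⁻¹ x), Paper.perm_apply_inv_self]
  set t : Fin N → Fin N := fun z => if z ∈ s₁ then π z else if z ∈ s₂ then π⁻¹ z else z
    with htdef
  have ht1 : ∀ z ∈ s₁, t z = π z := by
    intro z hz
    simp only [htdef]
    rw [if_pos hz]
  have ht2 : ∀ z, z ∉ s₁ → z ∈ s₂ → t z = π⁻¹ z := by
    intro z hz1 hz2
    simp only [htdef]
    rw [if_neg hz1, if_pos hz2]
  have ht3 : ∀ z, z ∉ s₁ → z ∉ s₂ → t z = z := by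
    intro z hz1 hz2
    simp only [htdef]
    rw [if_neg hz1, if_neg hz2]
  have hinv : ∀ z, t (t z) = z := by
    intro z
    by_cases hz1 : z ∈ s₁
    · have hπz : π z ∈ s₂ := (hπs z).mp hz1
      have hπz1 : π z ∉ s₁ := fun hh => Finset.disjoint_left.mp hdisj hh hπz
      rw [ht1 z hz1, ht2 _ hπz1 hπz, Paper.perm_inv_apply_self]
    · by_cases hz2 : z ∈ s₂
      · have hz1' : π⁻¹ z ∈ s₁ := (hπ's z).mp hz2
        rw [ht2 z hz1 hz2, ht1 _ hz1', Paper.perm_apply_inv_self]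
      · rw [ht3 z hz1 hz2, ht3 z hz1 hz2]
  set τ : Equiv.Perm (Fin N) := ⟨t, t, hinv, hinv⟩ with hτdef
  have hτap : ∀ w, τ w = t w := fun w => rfl
  have happ1 : ∀ z ∈ s₁, σ z = c₁ z :=
    fun z hz => ((Equiv.Perm.mem_cycleFactorsFinset_iff.mp h1).2 z hz).symm
  have happ2 : ∀ z ∈ s₂, σ z = c₂ z :=
    fun z hz => ((Equiv.Perm.mem_cycleFactorsFinset_iff.mp h2).2 z hz).symm
  have hkey : ∀ (c : Equiv.Perm (Fin N)), c ∈ σ.cycleFactorsFinset →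
      ∀ z, σ z ∈ c.support → z ∈ c.support := by
    intro c hc z hz
    have himg : Finset.image (fun w => σ w) c.support = c.support := by
      apply Finset.eq_of_subset_of_card_le
      · intro w hw
        rw [Finset.mem_image] at hw
        obtain ⟨u, hu, rfl⟩ := hw
        rw [((Equiv.Perm.mem_cycleFactorsFinset_iff.mp hc).2 u hu).symm]
        exact Equiv.Perm.apply_mem_support.mpr hu
      · rw [Finset.card_image_of_injective _ σ.injective]
    rw [← himg, Finset.mem_image] at hz
    obtain ⟨u, hu, he⟩ := hz
    rwa [← σ.injective he]
  have hconj1 : ∀ w, π (c₁ w) = c₂ (π w) := by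
    intro w
    have h5 := congrArg (fun ρ : Equiv.Perm (Fin N) => ρ (π w)) hπ
    simp only [Equiv.Perm.mul_apply, Paper.perm_inv_apply_self] at h5
    exact h5
  have hconj2 : ∀ w, π⁻¹ (c₂ w) = c₁ (π⁻¹ w) := by
    intro w
    have h5 := hconj1 (π⁻¹ w)
    rw [Paper.perm_apply_inv_self] at h5
    rw [← h5, Paper.perm_inv_apply_self]
  have hcom : ∀ z, τ (σ z) = σ (τ z) := by
    intro z
    by_cases hz1 : z ∈ s₁
    · have hσz : σ z = c₁ z := happ1 z hz1
      have hc₁z : c₁ z ∈ s₁ := Equiv.Perm.apply_mem_support.mpr hz1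
      have hπz : π z ∈ s₂ := (hπs z).mp hz1
      rw [hτap, hτap, hσz, ht1 _ hc₁z, ht1 _ hz1, hconj1, ← happ2 _ hπz]
    · by_cases hz2 : z ∈ s₂
      · have hσz : σ z = c₂ z := happ2 z hz2
        have hc₂z : c₂ z ∈ s₂ := Equiv.Perm.apply_mem_support.mpr hz2
        have hc₂z1 : c₂ z ∉ s₁ := fun hh => Finset.disjoint_left.mp hdisj hh hc₂z
        have hπz : π⁻¹ z ∈ s₁ := (hπ's z).mp hz2
        rw [hτap, hτap, hσz, ht2 _ hc₂z1 hc₂z, ht2 _ hz1 hz2, hconj2, ← happ1 _ hπz]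
      · have hσ1 : σ z ∉ s₁ := fun hh => hz1 (hkey c₁ h1 z hh)
        have hσ2 : σ z ∉ s₂ := fun hh => hz2 (hkey c₂ h2 z hh)
        rw [hτap, hτap, ht3 _ hσ1 hσ2, ht3 _ hz1 hz2]
  have hcommτ : τ * σ * τ⁻¹ = σ := by
    apply conj_eq_self_of_commute
    apply Equiv.ext
    intro z
    simp only [Equiv.Perm.mul_apply]
    exact hcom z
  have hsupp : τ.support = s₁ ∪ s₂ := by
    apply Finset.ext
    intro z
    rw [Equiv.Perm.mem_support, Finset.mem_union]
    constructor
    · intro hz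
      by_contra hc
      push_neg at hc
      exact hz ((hτap z).trans (ht3 z hc.1 hc.2))
    · intro hz
      by_cases hz1 : z ∈ s₁
      · rw [hτap, ht1 z hz1]
        intro he
        have h6 := (hπs z).mp hz1
        rw [he] at h6
        exact Finset.disjoint_left.mp hdisj hz1 h6
      · rcases hz with hz | hz
        · exact absurd hz hz1
        · rw [hτap, ht2 z hz1 hz]
          intro he
          have h6 := (hπ's z).mp hz
          rw [he] at h6
          exact Finset.disjoint_left.mp hdisj h6 hz
  refine ⟨τ, hcommτ, hsupp, ?_⟩
  apply Equiv.ext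
  intro z
  simp only [Equiv.Perm.mul_apply, Equiv.Perm.one_apply]
  exact (congrArg τ (hτap z)).trans ((hτap (t z)).trans (hinv z))

lemma exists_odd_commute {σ : Equiv.Perm (Fin N)}
    (h : ¬ ((fullCycleType σ).Nodup ∧ ∀ p ∈ fullCycleType σ, Odd p)) :
    ∃ τ : Equiv.Perm (Fin N), τ * σ * τ⁻¹ = σ ∧ Equiv.Perm.sign τ = -1 := by
  classical
  by_cases hodd : ∀ p ∈ fullCycleType σ, Odd p
  · have hnd : ¬ (fullCycleType σ).Nodup := fun hh => h ⟨hh, hodd⟩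
    rw [Multiset.nodup_iff_count_le_one] at hnd
    push_neg at hnd
    obtain ⟨p, hp⟩ := hnd
    have hp2 : 2 ≤ Multiset.count p (fullCycleType σ) := hp
    have hpodd : Odd p := hodd p (Multiset.count_pos.mp (by omega))
    by_cases hp1 : p = 1
    · subst hp1
      have hct1 : Multiset.count 1 σ.cycleType = 0 := by
        rw [Multiset.count_eq_zero]
        intro hmem
        have := Equiv.Perm.two_le_of_mem_cycleType hmem
        omega
      have h2 : 2 ≤ N - σ.cycleType.sum := by
        rw [fullCycleType, Multiset.count_add, hct1, Multiset.count_replicate_self] at hp2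
        omega
      have hcompl : 1 < ((σ.support)ᶜ : Finset (Fin N)).card := by
        rw [Finset.card_compl, ← Equiv.Perm.sum_cycleType]
        have : Fintype.card (Fin N) = N := Fintype.card_fin N
        omega
      obtain ⟨a, ha, b, hb, hab⟩ := Finset.one_lt_card.mp hcompl
      have hσa : σ a = a := by
        rw [Finset.mem_compl, Equiv.Perm.notMem_support] at ha
        exact ha
      have hσb : σ b = b := by
        rw [Finset.mem_compl, Equiv.Perm.notMem_support] at hb
        exact hb
      refine ⟨Equiv.swap a b, ?_, Equiv.Perm.sign_swap hab⟩
      apply conj_eq_self_of_commute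
      apply Equiv.Perm.Disjoint.commute
      intro x
      by_cases hx : x = a ∨ x = b
      · right
        rcases hx with rfl | rfl
        · exact hσa
        · exact hσb
      · left
        push_neg at hx
        exact Equiv.swap_apply_of_ne_of_ne hx.1 hx.2
    · have hpct : 2 ≤ Multiset.count p σ.cycleType := by
        rw [fullCycleType, Multiset.count_add, Multiset.count_replicate, if_neg (fun he => hp1 he.symm)] at hp2
        omega
      rw [Equiv.Perm.cycleType_def] at hpct
      have hmem1 : p ∈ Multiset.map (Finset.card ∘ Equiv.Perm.support)
          σ.cycleFactorsFinset.val := Multiset.count_pos.mp (by omega)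
      rw [Multiset.mem_map] at hmem1
      obtain ⟨c₁, hc₁, hcard1⟩ := hmem1
      have hrest : 1 ≤ Multiset.count p (Multiset.map (Finset.card ∘ Equiv.Perm.support)
          ((σ.cycleFactorsFinset.val).erase c₁)) := by
        have hce := Multiset.cons_erase hc₁
        rw [← hce, Multiset.map_cons, Multiset.count_cons, if_pos hcard1.symm] at hpct
        omega
      have hmem2 : p ∈ Multiset.map (Finset.card ∘ Equiv.Perm.support)
          ((σ.cycleFactorsFinset.val).erase c₁) := Multiset.count_pos.mp (by omega)
      rw [Multiset.mem_map] at hmem2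
      obtain ⟨c₂, hc₂e, hcard2⟩ := hmem2
      have hndv : (σ.cycleFactorsFinset.val).Nodup := σ.cycleFactorsFinset.nodup
      have hc₂ : c₂ ∈ σ.cycleFactorsFinset.val := Multiset.mem_of_mem_erase hc₂e
      have hne : c₁ ≠ c₂ := by
        intro he
        rw [he] at hc₂e
        exact (Multiset.Nodup.notMem_erase hndv) hc₂e
      have hcards : c₁.support.card = c₂.support.card := by
        simp only [Function.comp_apply] at hcard1 hcard2
        omega
      obtain ⟨τ, hτc, hτs, hτ2⟩ := exists_swap_conj (Finset.mem_def.mpr hc₁)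
        (Finset.mem_def.mpr hc₂) hne hcards
      refine ⟨τ, hτc, ?_⟩
      have hpc : c₁.support.card = p := by
        simp only [Function.comp_apply] at hcard1
        omega
      have hp2' : 2 ≤ p := by
        have : p ∈ σ.cycleType := by
          rw [Equiv.Perm.cycleType_def, Multiset.mem_map]
          exact ⟨c₁, hc₁, hcard1⟩
        exact Equiv.Perm.two_le_of_mem_cycleType this
      have hdisj : Disjoint c₁.support c₂.support :=
        ((Equiv.Perm.cycleFactorsFinset_pairwise_disjoint σ)
          (Finset.mem_coe.mpr (Finset.mem_def.mpr hc₁))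
          (Finset.mem_coe.mpr (Finset.mem_def.mpr hc₂)) hne).disjoint_support
      have hsuppcard : τ.support.card = p + p := by
        rw [hτs, Finset.card_union_of_disjoint hdisj, hpc]
        simp only [Function.comp_apply] at hcard1 hcard2
        omega
      have hτne : τ ≠ 1 := by
        intro he
        rw [he, Equiv.Perm.support_one, Finset.card_empty] at hsuppcard
        omega
      have horder : orderOf τ = 2 := by
        apply orderOf_eq_prime
        · rw [pow_two]
          exact hτ2
        · exact hτne
      have hct2 : ∀ q ∈ τ.cycleType, q = 2 := by
        intro q hq
        have hdvd : q ∣ 2 := by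
          rw [← horder, ← Equiv.Perm.lcm_cycleType]
          exact Multiset.dvd_lcm hq
        have h7 := Equiv.Perm.two_le_of_mem_cycleType hq
        have h8 := Nat.le_of_dvd (by norm_num) hdvd
        omega
      have hsumct : τ.cycleType.sum = p + p := by
        rw [Equiv.Perm.sum_cycleType, hsuppcard]
      have hcardct : Multiset.card τ.cycleType = p := by
        have hrep : τ.cycleType = Multiset.replicate (Multiset.card τ.cycleType) 2 :=
          Multiset.eq_replicate.mpr ⟨rfl, hct2⟩
        rw [hrep, Multiset.sum_replicate, smul_eq_mul] at hsumct
        omega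
      rw [Equiv.Perm.sign_of_cycleType, hsumct, hcardct]
      apply Odd.neg_one_pow
      rw [Nat.odd_iff] at hpodd ⊢
      omega
  · push_neg at hodd
    obtain ⟨p, hpmem, hpodd⟩ := hodd
    have hp1 : p ≠ 1 := by
      intro he
      rw [he] at hpodd
      exact hpodd odd_one
    have hpct : p ∈ σ.cycleType := by
      rw [fullCycleType] at hpmem
      rcases Multiset.mem_add.mp hpmem with h' | h'
      · exact h'
      · exact absurd (Multiset.eq_of_mem_replicate h') hp1
    rw [Equiv.Perm.cycleType_def, Multiset.mem_map] at hpct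
    obtain ⟨c, hcmem, hccard⟩ := hpct
    have hcmem' : c ∈ σ.cycleFactorsFinset := Finset.mem_def.mpr hcmem
    refine ⟨c, conj_eq_self_of_commute (factor_commute hcmem'), ?_⟩
    have hcyc := (Equiv.Perm.mem_cycleFactorsFinset_iff.mp hcmem').1
    rw [hcyc.sign]
    have heven : Even c.support.card := by
      simp only [Function.comp_apply] at hccard
      rw [Nat.even_iff]
      rw [Nat.odd_iff] at hpodd
      omega
    rw [heven.neg_one_pow]

end Paper


namespace Paper

variable {n : ℕ}

def toPermN (n : ℕ) (b : List ℕ) : Equiv.Perm (Fin n) :=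
  (b.filterMap (fun m => if h : m < n then some (⟨m, h⟩ : Fin n) else none)).formPerm

lemma permOfList_eq (L : List ℕ) :
    permOfList n L = ((blocksAux L 0).map (toPermN n)).prod := rfl

lemma filterMap_val {b : List ℕ} (hb : ∀ m ∈ b, m < n) :
    (b.filterMap (fun m => if h : m < n then some (⟨m, h⟩ : Fin n) else none)).map Fin.val
      = b := by
  induction b with
  | nil => rfl
  | cons a t ih =>
    have ha : a < n := hb a (List.mem_cons_self)
    have hfa : (fun m => if h : m < n then some (⟨m, h⟩ : Fin n) else none) a
        = some (⟨a, ha⟩ : Fin n) := dif_pos ha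
    simp only [List.filterMap_cons, hfa, List.map_cons]
    rw [ih (fun m hm => hb m (List.mem_cons_of_mem _ hm))]

lemma mem_filterMap_iff {b : List ℕ} (hb : ∀ m ∈ b, m < n) (x : Fin n) :
    x ∈ b.filterMap (fun m => if h : m < n then some (⟨m, h⟩ : Fin n) else none)
      ↔ (x : ℕ) ∈ b := by
  constructor
  · intro hx
    have h1 := List.mem_map_of_mem (f := Fin.val) hx
    rwa [filterMap_val hb] at h1
  · intro hx
    have h1 : (x : ℕ) ∈ (b.filterMap
        (fun m => if h : m < n then some (⟨m, h⟩ : Fin n) else none)).map Fin.val := by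
      rw [filterMap_val hb]
      exact hx
    rw [List.mem_map] at h1
    obtain ⟨y, hy, he⟩ := h1
    have : y = x := Fin.ext he
    rwa [← this]

lemma blocksAux_cons (k : ℕ) (t : List ℕ) (o : ℕ) :
    blocksAux (k :: t) o = ((List.range k).map (o + ·)) :: blocksAux t (o + k) := rfl

lemma permAux_spec : ∀ (L : List ℕ) (o : ℕ), (∀ p ∈ L, 0 < p) → o + L.sum ≤ n →
    (((blocksAux L o).map (toPermN n)).prod).cycleType
        = Multiset.filter (fun p => 2 ≤ p) (↑L : Multiset ℕ)
      ∧ ∀ x : Fin n, (((blocksAux L o).map (toPermN n)).prod) x ≠ x →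
        o ≤ (x : ℕ) ∧ (x : ℕ) < o + L.sum := by
  intro L
  induction L with
  | nil =>
    intro o hp hb
    constructor
    · show ((List.map (toPermN n) []).prod).cycleType = _
      simp [Equiv.Perm.cycleType_one]
    · intro x hx
      exact absurd rfl hx
  | cons k t ih =>
    intro o hp hb
    rw [blocksAux_cons, List.map_cons, List.prod_cons]
    have hkpos : 0 < k := hp k (List.mem_cons_self)
    have hsum : o + (k + t.sum) ≤ n := by
      rw [List.sum_cons] at hb
      omega
    obtain ⟨ih1, ih2⟩ := ih (o + k) (fun p hp' => hp p (List.mem_cons_of_mem _ hp'))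
      (by omega)
    set B := (List.range k).map (o + ·) with hB
    have hBbound : ∀ m ∈ B, m < n := by
      intro m hm
      rw [hB, List.mem_map] at hm
      obtain ⟨i, hi, rfl⟩ := hm
      rw [List.mem_range] at hi
      omega
    have hBnd : B.Nodup := by
      rw [hB]
      exact List.Nodup.map (fun a b h => by omega) List.nodup_range
    set b' := B.filterMap (fun m => if h : m < n then some (⟨m, h⟩ : Fin n) else none)
      with hb'
    have htp : toPermN n B = b'.formPerm := rfl
    have hval : b'.map Fin.val = B := filterMap_val hBbound
    have hlen : b'.length = k := by
      have h1 := congrArg List.length hval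
      rw [List.length_map] at h1
      rw [h1, hB, List.length_map, List.length_range]
    have hnd' : b'.Nodup := by
      apply List.Nodup.of_map Fin.val
      rw [hval]
      exact hBnd
    have hmoveB : ∀ x : Fin n, toPermN n B x ≠ x → o ≤ (x:ℕ) ∧ (x:ℕ) < o + k := by
      intro x hx
      rw [htp] at hx
      have hx' : x ∈ b'.toFinset := List.support_formPerm_le' b' hx
      rw [List.mem_toFinset, hb', mem_filterMap_iff hBbound x, hB, List.mem_map] at hx'
      obtain ⟨i, hi, he⟩ := hx'
      rw [List.mem_range] at hi
      omega
    have hdisj : Equiv.Perm.Disjoint (toPermN n B)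
        (((blocksAux t (o + k)).map (toPermN n)).prod) := by
      intro x
      by_contra hc
      push_neg at hc
      obtain ⟨h1, h2⟩ := hc
      have hb1 := hmoveB x h1
      have hb2 := ih2 x h2
      omega
    constructor
    · rw [hdisj.cycleType_mul, ih1]
      rcases eq_or_lt_of_le (Nat.succ_le_of_lt hkpos) with hk1 | hk2
      · have hk1' : k = 1 := hk1.symm
        subst hk1'
        obtain ⟨a, ha⟩ := List.length_eq_one_iff.mp hlen
        have h1 : toPermN n B = 1 := by
          rw [htp, ha, List.formPerm_singleton]
        have hfc : Multiset.filter (fun p => 2 ≤ p) (↑((1:ℕ) :: t) : Multiset ℕ)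
            = Multiset.filter (fun p => 2 ≤ p) (↑t : Multiset ℕ) := by
          rw [← Multiset.cons_coe, Multiset.filter_cons, if_neg (by omega), zero_add]
        rw [h1, Equiv.Perm.cycleType_one, hfc, zero_add]
      · have hcyc : (toPermN n B).IsCycle := by
          rw [htp]
          exact List.isCycle_formPerm hnd' (by omega)
        have hsupp : (toPermN n B).support = b'.toFinset := by
          rw [htp]
          apply List.support_formPerm_of_nodup b' hnd'
          intro x he
          rw [he] at hlen
          simp at hlen
          omega
        have hfc : Multiset.filter (fun p => 2 ≤ p) (↑(k :: t) : Multiset ℕ)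
            = {k} + Multiset.filter (fun p => 2 ≤ p) (↑t : Multiset ℕ) := by
          rw [← Multiset.cons_coe, Multiset.filter_cons, if_pos (by omega)]
        rw [hcyc.cycleType, hsupp, List.toFinset_card_of_nodup hnd', hlen, hfc]
    · intro x hx
      rw [Equiv.Perm.mul_apply] at hx
      rw [List.sum_cons]
      by_cases h2 : (((blocksAux t (o + k)).map (toPermN n)).prod) x = x
      · rw [h2] at hx
        have := hmoveB x hx
        omega
      · have := ih2 x h2
        omega

lemma fullCycleType_permOfList (L : List ℕ) (hp : ∀ p ∈ L, 0 < p) (hs : L.sum = n) :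
    fullCycleType (permOfList n L) = ↑L := by
  classical
  have hmain := (permAux_spec (n := n) L 0 hp (by omega)).1
  rw [permOfList_eq] at *
  rw [fullCycleType, hmain]
  have hsplit : (↑L : Multiset ℕ) = Multiset.filter (fun p => 2 ≤ p) (↑L : Multiset ℕ)
      + Multiset.filter (fun p => ¬ 2 ≤ p) (↑L : Multiset ℕ) :=
    (Multiset.filter_add_not _ _).symm
  set R := Multiset.filter (fun p => ¬ 2 ≤ p) (↑L : Multiset ℕ) with hR
  have hRone : ∀ a ∈ R, a = 1 := by
    intro a ha
    rw [hR, Multiset.mem_filter] at ha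
    have := hp a (by exact_mod_cast ha.1)
    omega
  have hRrep : R = Multiset.replicate (Multiset.card R) 1 :=
    Multiset.eq_replicate.mpr ⟨rfl, hRone⟩
  have hsums : (Multiset.filter (fun p => 2 ≤ p) (↑L : Multiset ℕ)).sum + R.sum = n := by
    have h1 := congrArg Multiset.sum hsplit
    rw [Multiset.sum_add] at h1
    have h2 : (↑L : Multiset ℕ).sum = n := by rw [Multiset.sum_coe, hs]
    omega
  have hRsum : R.sum = Multiset.card R := by
    conv_lhs => rw [hRrep]
    rw [Multiset.sum_replicate, smul_eq_mul, mul_one]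
  have hcard : n - (Multiset.filter (fun p => 2 ≤ p) (↑L : Multiset ℕ)).sum
      = Multiset.card R := by omega
  conv_rhs => rw [hsplit]
  congr 1
  rw [hcard]
  exact hRrep.symm

end Paper


namespace Paper

variable {n : ℕ}

noncomputable def twVal (l : n.Partition) : ℂ :=
  Complex.I ^ mval l * ((Real.sqrt ((hookParts l).prod) : ℝ) : ℂ)

lemma twChar_eq_zero {l : n.Partition} {σ : Equiv.Perm (Fin n)}
    (h : ¬ ∃ τ : Equiv.Perm (Fin n), σ = τ * permOfList n (hookParts l) * τ⁻¹) :
    twChar l σ = 0 := by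
  simp only [twChar]
  rw [dif_neg h]

section SC

variable {l : n.Partition}

lemma hook_pos (hsc : IsSelfConj l) : ∀ p ∈ hookParts l, 0 < p :=
  fun p hp => (hookParts_odd hsc p hp).pos

lemma full_perm (hsc : IsSelfConj l) :
    fullCycleType (permOfList n (hookParts l)) = ↑(hookParts l) :=
  fullCycleType_permOfList _ (hook_pos hsc) (hookParts_sum hsc)

lemma full_nodup (hsc : IsSelfConj l) :
    (fullCycleType (permOfList n (hookParts l))).Nodup := by
  rw [full_perm hsc, Multiset.coe_nodup]
  exact hookParts_nodup l

lemma full_odd (hsc : IsSelfConj l) :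
    ∀ p ∈ fullCycleType (permOfList n (hookParts l)), Odd p := by
  rw [full_perm hsc]
  intro p hp
  exact hookParts_odd hsc p (by exact_mod_cast hp)

lemma conj_iff (hsc : IsSelfConj l) (σ : Equiv.Perm (Fin n)) :
    (∃ τ, σ = τ * permOfList n (hookParts l) * τ⁻¹)
      ↔ fullCycleType σ = ↑(hookParts l) := by
  constructor
  · rintro ⟨τ, rfl⟩
    rw [fullCycleType_conj, full_perm hsc]
  · intro h
    exact exists_conj_of_fullCycleType_eq ((full_perm hsc).trans h.symm)

lemma sign_unique (hsc : IsSelfConj l) {σ τ1 τ2 : Equiv.Perm (Fin n)}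
    (h1 : σ = τ1 * permOfList n (hookParts l) * τ1⁻¹)
    (h2 : σ = τ2 * permOfList n (hookParts l) * τ2⁻¹) :
    Equiv.Perm.sign τ1 = Equiv.Perm.sign τ2 := by
  set π := permOfList n (hookParts l) with hπ
  have h3 : τ1 * π * τ1⁻¹ = τ2 * π * τ2⁻¹ := h1.symm.trans h2
  have hc : (τ2⁻¹ * τ1) * π * (τ2⁻¹ * τ1)⁻¹ = π := by
    calc (τ2⁻¹ * τ1) * π * (τ2⁻¹ * τ1)⁻¹ = τ2⁻¹ * (τ1 * π * τ1⁻¹) * τ2 := by group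
    _ = τ2⁻¹ * (τ2 * π * τ2⁻¹) * τ2 := by rw [h3]
    _ = π := by group
  have h4 := sign_eq_one_of_commute (full_nodup hsc) (full_odd hsc) hc
  rw [_root_.map_mul, map_inv] at h4
  exact (inv_mul_eq_one.mp h4).symm

lemma twChar_of_conj (hsc : IsSelfConj l) {σ τ : Equiv.Perm (Fin n)}
    (h : σ = τ * permOfList n (hookParts l) * τ⁻¹) :
    twChar l σ = ((Equiv.Perm.sign τ : ℤ) : ℂ) * twVal l := by
  have hex : ∃ τ' : Equiv.Perm (Fin n), σ = τ' * permOfList n (hookParts l) * τ'⁻¹ := ⟨τ, h⟩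
  simp only [twChar]
  rw [dif_pos hex]
  have hs := sign_unique hsc (Exists.choose_spec hex) h
  rw [hs, twVal, mul_assoc]

lemma twVal_ne_zero (hsc : IsSelfConj l) : twVal l ≠ 0 := by
  rw [twVal]
  apply mul_ne_zero
  · exact pow_ne_zero _ Complex.I_ne_zero
  · rw [Complex.ofReal_ne_zero]
    have hpos : 0 < (hookParts l).prod := List.prod_pos (hook_pos hsc)
    have : (0:ℝ) < ((hookParts l).prod : ℝ) := by exact_mod_cast hpos
    exact ne_of_gt (Real.sqrt_pos.mpr this)

lemma twChar_self (hsc : IsSelfConj l) :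
    twChar l (permOfList n (hookParts l)) = twVal l := by
  have h : permOfList n (hookParts l)
      = 1 * permOfList n (hookParts l) * (1 : Equiv.Perm (Fin n))⁻¹ := by group
  rw [twChar_of_conj hsc h, _root_.map_one]
  simp

end SC

end Paper

/-- The subspace of twisted class functions on `S_n`. -/
noncomputable def twistedSpace (n : ℕ) : Submodule ℂ (Equiv.Perm (Fin n) → ℂ) where
  carrier := {χ | ∀ σ τ : Equiv.Perm (Fin n),
    χ (τ * σ * τ⁻¹) = ((Equiv.Perm.sign τ : ℤ) : ℂ) * χ σ}
  add_mem' := by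
    intro a b ha hb σ τ
    simp only [Pi.add_apply, ha σ τ, hb σ τ]
    ring
  zero_mem' := by
    intro σ τ
    simp
  smul_mem' := by
    intro c a ha σ τ
    simp only [Pi.smul_apply, smul_eq_mul, ha σ τ]
    ring

namespace Paper

variable {n : ℕ}
variable {l : n.Partition}

lemma twChar_mem (hsc : IsSelfConj l) : twChar l ∈ twistedSpace n := by
  intro σ τ
  by_cases hex : ∃ ρ, σ = ρ * permOfList n (hookParts l) * ρ⁻¹
  · obtain ⟨ρ, hρ⟩ := hex
    have h1 : τ * σ * τ⁻¹ = (τ * ρ) * permOfList n (hookParts l) * (τ * ρ)⁻¹ := by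
      rw [hρ]
      group
    rw [twChar_of_conj hsc h1, twChar_of_conj hsc hρ]
    have hsig : ((Equiv.Perm.sign (τ * ρ) : ℤ) : ℂ)
        = ((Equiv.Perm.sign τ : ℤ) : ℂ) * ((Equiv.Perm.sign ρ : ℤ) : ℂ) := by
      rw [_root_.map_mul, Units.val_mul, Int.cast_mul]
    rw [hsig]
    ring
  · have h2 : ¬ ∃ ρ, τ * σ * τ⁻¹ = ρ * permOfList n (hookParts l) * ρ⁻¹ := by
      rintro ⟨ρ, hρ⟩
      apply hex
      refine ⟨τ⁻¹ * ρ, ?_⟩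
      calc σ = τ⁻¹ * (τ * σ * τ⁻¹) * τ := by group
      _ = τ⁻¹ * (ρ * permOfList n (hookParts l) * ρ⁻¹) * τ := by rw [hρ]
      _ = (τ⁻¹ * ρ) * permOfList n (hookParts l) * (τ⁻¹ * ρ)⁻¹ := by group
    rw [twChar_eq_zero h2, twChar_eq_zero hex, mul_zero]


end Paper

/-- The twisted characters `χ^{*λ}`, for `λ` ranging over the self-conjugate partitions
of `n`, form a basis of the space of functions `χ : S_n → ℂ` with
`χ(τστ⁻¹) = sgn(τ) χ(σ)`. -/
theorem twChar_basis (n : ℕ) :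
    LinearIndependent ℂ
      (fun l : {l : n.Partition // Paper.IsSelfConj l} => Paper.twChar l.1) ∧
    Submodule.span ℂ
      (Set.range (fun l : {l : n.Partition // Paper.IsSelfConj l} => Paper.twChar l.1)) =
      twistedSpace n := by
  classical
  constructor
  · rw [linearIndependent_iff']
    intro s g hsum i hi
    set π := Paper.permOfList n (Paper.hookParts i.1) with hπ
    have h1 : ∑ j ∈ s, g j * Paper.twChar j.1 π = 0 := by
      have h0 := congrFun hsum π
      simpa [Finset.sum_apply, Pi.smul_apply, smul_eq_mul] using h0
    rw [Finset.sum_eq_single i] at h1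
    · rw [Paper.twChar_self i.2] at h1
      exact (mul_eq_zero.mp h1).resolve_right (Paper.twVal_ne_zero i.2)
    · intro j hj hne
      have hty : Paper.fullCycleType π ≠ ↑(Paper.hookParts j.1) := by
        rw [hπ, Paper.full_perm i.2]
        intro he
        apply hne
        have hl : Paper.hookParts i.1 = Paper.hookParts j.1 :=
          Paper.eq_of_coe_eq_of_pairwise_gt he (Paper.hookParts_pairwise _)
            (Paper.hookParts_pairwise _)
        exact Subtype.ext (Paper.hookParts_inj j.2 i.2 hl.symm)
      rw [Paper.twChar_eq_zero (fun hex => hty ((Paper.conj_iff j.2 π).mp hex)), mul_zero]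
    · intro hni
      exact absurd hi hni
  · apply le_antisymm
    · rw [Submodule.span_le]
      rintro x ⟨j, rfl⟩
      exact Paper.twChar_mem j.2
    · intro χ hχ
      have hprop : ∀ σ τ : Equiv.Perm (Fin n),
          χ (τ * σ * τ⁻¹) = ((Equiv.Perm.sign τ : ℤ) : ℂ) * χ σ := hχ
      have hfin : χ = ∑ j : {l : n.Partition // Paper.IsSelfConj l},
          (χ (Paper.permOfList n (Paper.hookParts j.1)) / Paper.twVal j.1) •
            Paper.twChar j.1 := by
        funext σ
        rw [Finset.sum_apply]
        simp only [Pi.smul_apply, smul_eq_mul]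
        by_cases hDO : (Paper.fullCycleType σ).Nodup ∧ ∀ p ∈ Paper.fullCycleType σ, Odd p
        · have hsum' : (Paper.fullCycleType σ).sum = n := by
            rw [Paper.fullCycleType, Multiset.sum_add, Multiset.sum_replicate, smul_eq_mul,
              mul_one]
            have h5 : σ.support.card ≤ n := by
              have := Finset.card_le_univ σ.support
              simpa [Fintype.card_fin] using this
            rw [Equiv.Perm.sum_cycleType]
            omega
          obtain ⟨l₀, hl₀sc, hl₀⟩ := Paper.exists_selfConj_of_multiset
            (Paper.fullCycleType σ) hDO.1 hDO.2 hsum'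
          obtain ⟨τ, hτ⟩ := (Paper.conj_iff hl₀sc σ).mpr hl₀.symm
          have hχσ : χ σ = ((Equiv.Perm.sign τ : ℤ) : ℂ) *
              χ (Paper.permOfList n (Paper.hookParts l₀)) := by
            rw [hτ]
            exact hprop _ τ
          rw [Finset.sum_eq_single (⟨l₀, hl₀sc⟩ : {l : n.Partition // Paper.IsSelfConj l})]
          · rw [Paper.twChar_of_conj hl₀sc hτ, hχσ]
            have hne := Paper.twVal_ne_zero hl₀sc
            field_simp
          · intro j hj hne
            have hty : Paper.fullCycleType σ ≠ ↑(Paper.hookParts j.1) := by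
              rw [← hl₀]
              intro he
              apply hne
              have hl := Paper.eq_of_coe_eq_of_pairwise_gt he (Paper.hookParts_pairwise _)
                (Paper.hookParts_pairwise _)
              exact Subtype.ext (Paper.hookParts_inj j.2 hl₀sc hl.symm)
            rw [Paper.twChar_eq_zero (fun hex => hty ((Paper.conj_iff j.2 σ).mp hex)),
              mul_zero]
          · intro habs
            exact absurd (Finset.mem_univ _) habs
        · obtain ⟨τ, hτc, hτs⟩ := Paper.exists_odd_commute hDO
          have hχ0 : χ σ = 0 := by
            have h6 := hprop σ τ
            rw [hτc, hτs] at h6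
            have h7 : (((-1 : ℤˣ) : ℤ) : ℂ) = -1 := by simp
            rw [h7, neg_one_mul] at h6
            exact add_self_eq_zero.mp (eq_neg_iff_add_eq_zero.mp h6)
          rw [hχ0]
          symm
          apply Finset.sum_eq_zero
          intro j hj
          have hty : Paper.fullCycleType σ ≠ ↑(Paper.hookParts j.1) := by
            intro he
            apply hDO
            constructor
            · rw [he, Multiset.coe_nodup]
              exact Paper.hookParts_nodup _
            · rw [he]
              intro p hp
              exact Paper.hookParts_odd j.2 p (by exact_mod_cast hp)
          rw [Paper.twChar_eq_zero (fun hex => hty ((Paper.conj_iff j.2 σ).mp hex)),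
            mul_zero]
      rw [hfin]
      apply Submodule.sum_mem
      intro j hj
      apply Submodule.smul_mem
      apply Submodule.subset_span
      exact ⟨j, rfl⟩
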